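/- arXiv:2604.05611 — 3 statements merged into one kernel-verified Lean document; each statement's English description precedes it below -/
import Mathlib

section
/- Let X be a compact metric space, and let (T_n)_{n≥1} be a sequence of homeomorphisms of X converging uniformly to a homeomorphism T of X. Let μ be a T-invariant Borel probability measure and, for each n, let μ_n be a T_n-invariant Borel probability measure, with μ_n converging weakly to μ. Let 𝒬 be a finite Borel partition of X such that μ(∂A) = 0 for every atom A of 𝒬. Then for every integer m ≥ 1, H_{μ_n}(⋁_{i=0}^{m−1} T_n^{−i}𝒬) → H_{μ}(⋁_{i=0}^{m−1} T^{−i}𝒬) as n → ∞. -/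
open MeasureTheory Filter Topology

/-- A finite Borel partition of `X`, with atoms indexed by `Fin k`. -/
def IsFinPartition {X : Type*} [MeasurableSpace X] {k : ℕ} (P : Fin k → Set X) : Prop :=
  (∀ i, MeasurableSet (P i)) ∧
  (Pairwise fun i j => Disjoint (P i) (P j)) ∧
  (⋃ i, P i) = Set.univ

/-- The entropy `H_ν(⋁_{i=0}^{m-1} S^{-i} P)` of the `m`-th join of the partition `P`
under the map `S`, with respect to the measure `ν` (convention `0 log 0 = 0`). -/
noncomputable def entJoin {X : Type*} [MeasurableSpace X] (ν : Measure X) (S : X → X)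
    {k : ℕ} (P : Fin k → Set X) (m : ℕ) : ℝ :=
  ∑ c : Fin m → Fin k,
    Real.negMulLog ((ν (⋂ i : Fin m, S^[(i : ℕ)] ⁻¹' P (c i))).toReal)

/-!
Once the iterates `T_n^i` are uniformly `δ`-close to `T^i` for `i < m`, an atom
`⋂ T_n^{-i} Q_{c_i}` of the `T_n`-join differs from the corresponding atom of the `T`-join only
inside the closed set of points `x` such that some `T^i x` lies within `δ` of both `Q_{c_i}` and
its complement. By `T`-invariance its `μ`-measure is at most `∑ μ(δ-collar of Q_{c_i})`, which
tends to `∑ μ(∂Q_{c_i}) = 0`; by the portmanteau theorem its `μ_n`-measure is then eventually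
small. The fixed `T`-atom has `μ`-null boundary, so its `μ_n`-measure converges to its
`μ`-measure, and continuity of `x ↦ -x log x` finishes the proof.
-/

open Metric Set
open scoped symmDiff ENNReal

theorem TendstoUniformly.comp_tendstoUniformly {ι α β γ : Type*} [UniformSpace β]
    [UniformSpace γ] {p : Filter ι} {F : ι → β → γ} {f : β → γ} {G : ι → α → β} {g : α → β}
    (hF : TendstoUniformly F f p) (hf : UniformContinuous f) (hG : TendstoUniformly G g p) :
    TendstoUniformly (fun n => F n ∘ G n) (f ∘ g) p := by
  intro u hu
  obtain ⟨v, hv, hvu⟩ := comp_mem_uniformity_sets hu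
  filter_upwards [hf.comp_tendstoUniformly hG v hv, hF v hv] with n hfG hF x
  exact hvu (SetRel.prodMk_mem_comp (hfG x) (hF (G n x)))

theorem TendstoUniformly.iterate {ι α : Type*} [UniformSpace α] {p : Filter ι}
    {F : ι → α → α} {f : α → α} (hF : TendstoUniformly F f p) (hf : UniformContinuous f) :
    ∀ i : ℕ, TendstoUniformly (fun n => (F n)^[i]) f^[i] p
  | 0 => fun _ hu => Eventually.of_forall fun _ _ => refl_mem_uniformity hu
  | i + 1 => by
    simp only [Function.iterate_succ']
    exact hF.comp_tendstoUniformly hf (hF.iterate hf i)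

theorem frontier_iInter_subset {ι X : Type*} [Finite ι] [TopologicalSpace X] (s : ι → Set X) :
    frontier (⋂ i, s i) ⊆ ⋃ i, frontier (s i) := by
  intro x hx
  rw [frontier_eq_closure_inter_closure, compl_iInter, closure_iUnion_of_finite] at hx
  obtain ⟨i, hi⟩ := mem_iUnion.1 hx.2
  refine mem_iUnion.2 ⟨i, ?_⟩
  rw [frontier_eq_closure_inter_closure]
  exact ⟨closure_mono (iInter_subset s i) hx.1, hi⟩

theorem Set.iInter_symmDiff_iInter_subset {ι α : Type*} (s t : ι → Set α) :
    (⋂ i, s i) ∆ (⋂ i, t i) ⊆ ⋃ i, s i ∆ t i := by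
  rw [← compl_symmDiff_compl, compl_iInter, compl_iInter]
  exact iUnion_symmDiff_iUnion_subset.trans_eq (by simp_rw [compl_symmDiff_compl])

theorem MeasureTheory.measureReal_le_measureReal_add_measureReal_symmDiff {α : Type*}
    [MeasurableSpace α] (μ : Measure α) [IsFiniteMeasure μ] (s t : Set α) :
    μ.real s ≤ μ.real t + μ.real (s ∆ t) :=
  calc μ.real s ≤ μ.real (t ∪ s ∆ t) :=
        measureReal_mono fun x hx => by by_cases hxt : x ∈ t <;> simp [mem_symmDiff, *]
    _ ≤ μ.real t + μ.real (s ∆ t) := measureReal_union_le t (s ∆ t)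

section Collar

variable {X : Type*} [PseudoMetricSpace X]

def Metric.collar (δ : ℝ) (s : Set X) : Set X :=
  cthickening δ s ∩ cthickening δ sᶜ

theorem Metric.isClosed_collar (δ : ℝ) (s : Set X) : IsClosed (collar δ s) :=
  isClosed_cthickening.inter isClosed_cthickening

theorem Metric.iInter_collar (s : Set X) : ⋂ δ > 0, collar δ s = frontier s := by
  simp only [collar, frontier_eq_closure_inter_closure, closure_eq_iInter_cthickening,
    ← iInter_inter_distrib]

theorem MeasureTheory.tendsto_measure_preimage_collar {α : Type*} [TopologicalSpace α]
    [MeasurableSpace α] [OpensMeasurableSpace α] (μ : Measure α) [IsFiniteMeasure μ]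
    {f : α → X} (hf : Continuous f) (s : Set X) :
    Tendsto (fun δ => μ (f ⁻¹' collar δ s)) (𝓝[>] 0) (𝓝 (μ (f ⁻¹' frontier s))) := by
  rw [← iInter_collar, preimage_iInter₂]
  exact tendsto_measure_biInter_gt
    (fun δ _ => ((isClosed_collar δ s).preimage hf).nullMeasurableSet)
    (fun _ _ _ hδ => preimage_mono (inter_subset_inter (cthickening_mono hδ _)
      (cthickening_mono hδ _)))
    ⟨1, one_pos, measure_ne_top μ _⟩

theorem Metric.preimage_symmDiff_preimage_subset_collar {α : Type*} {f g : α → X} {δ : ℝ}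
    (hfg : ∀ x, dist (f x) (g x) ≤ δ) (s : Set X) :
    (g ⁻¹' s) ∆ (f ⁻¹' s) ⊆ f ⁻¹' collar δ s := by
  rintro x (⟨hg, hf⟩ | ⟨hf, hg⟩)
  · exact ⟨mem_cthickening_of_dist_le _ _ _ _ hg (hfg x), self_subset_cthickening _ hf⟩
  · exact ⟨self_subset_cthickening _ hf, mem_cthickening_of_dist_le _ _ _ _ hg (hfg x)⟩

theorem MeasureTheory.tendsto_measure_iUnion_preimage_collar {ι α : Type*} [Finite ι]
    [TopologicalSpace α] [MeasurableSpace α] [OpensMeasurableSpace α] (μ : Measure α)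
    [IsFiniteMeasure μ] {f : ι → α → X} (hf : ∀ i, Continuous (f i)) {s : ι → Set X}
    (hs : ∀ i, μ (f i ⁻¹' frontier (s i)) = 0) :
    Tendsto (fun δ => μ (⋃ i, f i ⁻¹' collar δ (s i))) (𝓝[>] 0) (𝓝 0) := by
  cases nonempty_fintype ι
  have h_sum : Tendsto (fun δ => ∑ i, μ (f i ⁻¹' collar δ (s i))) (𝓝[>] 0) (𝓝 0) := by
    simpa [hs] using tendsto_finsetSum Finset.univ fun i _ =>
      tendsto_measure_preimage_collar μ (hf i) (s i)
  exact tendsto_of_tendsto_of_tendsto_of_le_of_le tendsto_const_nhds h_sum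
    (fun _ => zero_le) fun _ => measure_iUnion_fintype_le _ _

end Collar

namespace MeasureTheory.ProbabilityMeasure

variable {Ω ι : Type*} [MeasurableSpace Ω] [TopologicalSpace Ω] [OpensMeasurableSpace Ω]
  [HasOuterApproxClosed Ω] {L : Filter ι} {μ : ProbabilityMeasure Ω} {μs : ι → ProbabilityMeasure Ω}

theorem tendsto_measureReal_of_symmDiff_subset_isClosed (hμs : Tendsto μs L (𝓝 μ))
    {B : Set Ω} (hB : (μ : Measure Ω) (frontier B) = 0) {A : ι → Set Ω}
    (hA : ∀ ε : ℝ≥0∞, 0 < ε → ∃ D, IsClosed D ∧ (μ : Measure Ω) D < ε ∧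
      ∀ᶠ i in L, A i ∆ B ⊆ D) :
    Tendsto (fun i => (μs i : Measure Ω).real (A i)) L (𝓝 ((μ : Measure Ω).real B)) := by
  have hB_lim : Tendsto (fun i => (μs i : Measure Ω).real B) L (𝓝 ((μ : Measure Ω).real B)) :=
    (ENNReal.tendsto_toReal (measure_ne_top _ B)).comp
      (tendsto_measure_of_null_frontier_of_tendsto' hμs hB)
  suffices Tendsto (fun i => (μs i : Measure Ω).real (A i) - (μs i : Measure Ω).real B) L (𝓝 0) by
    simpa using this.add hB_lim
  rw [NormedAddGroup.tendsto_nhds_zero]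
  intro ε hε
  obtain ⟨D, hD, hμD, hAD⟩ := hA (ENNReal.ofReal ε) (ENNReal.ofReal_pos.2 hε)
  have hμsD : ∀ᶠ i in L, (μs i : Measure Ω) D < ENNReal.ofReal ε :=
    eventually_lt_of_limsup_lt ((limsup_measure_closed_le_of_tendsto hμs hD).trans_lt hμD)
  filter_upwards [hμsD, hAD] with i hμsDi hADi
  set ν : Measure Ω := (μs i : Measure Ω)
  have hsymm : ν.real (A i ∆ B) < ε :=
    (measureReal_mono hADi).trans_lt (ENNReal.toReal_lt_of_lt_ofReal hμsDi)
  rw [Real.norm_eq_abs, abs_sub_lt_iff]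
  have h₁ := measureReal_le_measureReal_add_measureReal_symmDiff ν (A i) B
  have h₂ := measureReal_le_measureReal_add_measureReal_symmDiff ν B (A i)
  rw [symmDiff_comm] at h₂
  constructor <;> linarith

theorem tendsto_measureReal_iInter_preimage_of_tendstoUniformly {κ Y : Type*} [Finite κ]
    [PseudoMetricSpace Y] (hμs : Tendsto μs L (𝓝 μ)) {f : κ → Ω → Y} {F : ι → κ → Ω → Y}
    (hf : ∀ j, Continuous (f j))
    (hF : ∀ j, TendstoUniformly (fun i => F i j) (f j) L) {s : κ → Set Y}
    (hs : ∀ j, (μ : Measure Ω) (f j ⁻¹' frontier (s j)) = 0) :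
    Tendsto (fun i => (μs i : Measure Ω).real (⋂ j, F i j ⁻¹' s j)) L
      (𝓝 ((μ : Measure Ω).real (⋂ j, f j ⁻¹' s j))) := by
  refine tendsto_measureReal_of_symmDiff_subset_isClosed hμs ?_ fun ε hε => ?_
  · exact measure_mono_null ((frontier_iInter_subset _).trans
      (iUnion_mono fun j => (hf j).frontier_preimage_subset (s j))) (measure_iUnion_null hs)
  obtain ⟨δ, hδε, hδ⟩ := (((tendsto_measure_iUnion_preimage_collar _ hf hs).eventually
    (gt_mem_nhds hε)).and self_mem_nhdsWithin).exists
  refine ⟨_, isClosed_iUnion_of_finite fun j => (isClosed_collar δ (s j)).preimage (hf j),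
    hδε, ?_⟩
  have h_close : ∀ᶠ i in L, ∀ j x, dist (f j x) (F i j x) ≤ δ :=
    eventually_all.2 fun j =>
      (Metric.tendstoUniformly_iff.1 (hF j) δ hδ).mono fun _ h x => (h x).le
  filter_upwards [h_close] with i hi
  exact (iInter_symmDiff_iInter_subset _ _).trans
    (iUnion_mono fun j => preimage_symmDiff_preimage_subset_collar (hi j) (s j))

end MeasureTheory.ProbabilityMeasure

theorem stmt2_general {X : Type*} [MetricSpace X] [CompactSpace X] [MeasurableSpace X] [BorelSpace X]
    (T : ℕ → X ≃ₜ X) (Tlim : X ≃ₜ X)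
    (hunif : TendstoUniformly (fun n x => T n x) (⇑Tlim) atTop)
    (μ : Measure X) [IsProbabilityMeasure μ]
    (hμinv : ∀ B : Set X, MeasurableSet B → μ (⇑Tlim ⁻¹' B) = μ B)
    (μn : ℕ → Measure X) (hprob : ∀ n, IsProbabilityMeasure (μn n))
    (hweak : ∀ g : C(X, ℝ), Tendsto (fun n => ∫ x, g x ∂(μn n)) atTop (𝓝 (∫ x, g x ∂μ)))
    {k : ℕ} (Q : Fin k → Set X)
    (hbd : ∀ i, μ (frontier (Q i)) = 0)
    (m : ℕ) :
    Tendsto (fun n => entJoin (μn n) (⇑(T n)) Q m) atTop (𝓝 (entJoin μ (⇑Tlim) Q m)) := by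
  let ν : ProbabilityMeasure X := ⟨μ, inferInstance⟩
  let νs : ℕ → ProbabilityMeasure X := fun n => ⟨μn n, hprob n⟩
  have hνs : Tendsto νs atTop (𝓝 ν) :=
    ProbabilityMeasure.tendsto_iff_forall_integral_tendsto.2 fun g => hweak g.toContinuousMap
  have hTlim : MeasurePreserving Tlim μ μ :=
    ⟨Tlim.continuous.measurable, Measure.ext fun B hB => by
      rw [Measure.map_apply Tlim.continuous.measurable hB, hμinv B hB]⟩
  have hiter := hunif.iterate (CompactSpace.uniformContinuous_of_continuous Tlim.continuous)
  refine tendsto_finsetSum _ fun c _ => (Real.continuous_negMulLog.tendsto _).comp ?_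
  exact ProbabilityMeasure.tendsto_measureReal_iInter_preimage_of_tendstoUniformly hνs
    (fun i : Fin m => Tlim.continuous.iterate i) (fun i => hiter i) fun i => by
      show μ _ = 0
      rw [(hTlim.iterate i).measure_preimage isClosed_frontier.measurableSet.nullMeasurableSet,
        hbd]

theorem stmt2 {X : Type*} [MetricSpace X] [CompactSpace X] [MeasurableSpace X] [BorelSpace X]
    (T : ℕ → X ≃ₜ X) (Tlim : X ≃ₜ X)
    (hunif : TendstoUniformly (fun n x => T n x) (⇑Tlim) atTop)
    (μ : Measure X) [IsProbabilityMeasure μ]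
    (hμinv : ∀ B : Set X, MeasurableSet B → μ (⇑Tlim ⁻¹' B) = μ B)
    (μn : ℕ → Measure X) (hprob : ∀ n, IsProbabilityMeasure (μn n))
    (hinv : ∀ n, ∀ B : Set X, MeasurableSet B → (μn n) (⇑(T n) ⁻¹' B) = (μn n) B)
    (hweak : ∀ g : C(X, ℝ), Tendsto (fun n => ∫ x, g x ∂(μn n)) atTop (𝓝 (∫ x, g x ∂μ)))
    {k : ℕ} (Q : Fin k → Set X) (hQ : IsFinPartition Q)
    (hbd : ∀ i, μ (frontier (Q i)) = 0)
    (m : ℕ) (hm : 1 ≤ m) :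
    Tendsto (fun n => entJoin (μn n) (⇑(T n)) Q m) atTop (𝓝 (entJoin μ (⇑Tlim) Q m)) :=
  stmt2_general T Tlim hunif μ hμinv μn hprob hweak Q hbd m
end

section
/- Let X be a compact metric space, T : X → X a homeomorphism, and μ a Borel probability measure on X (not necessarily invariant). Let E be a finite nonempty subset of ℕ, 𝒬 a finite Borel partition of X, and m ≥ 1 an integer. Define μ^E := (1/#E) ∑_{j∈E} T^j_*μ (i.e. μ^E(B) = (1/#E)∑_{j∈E} μ(T^{−j}B)), 𝒬^E := ⋁_{j∈E} T^{−j}𝒬, and 𝒬^m := ⋁_{j=0}^{m−1} T^{−j}𝒬. Then (1/#E)·H_μ(𝒬^E) ≤ (1/m)·H_{μ^E}(𝒬^m) + 6m·(#((E+1)△E)/#E)·log #𝒬, where E+1 := {j+1 : j ∈ E} and △ denotes symmetric difference. -/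
open MeasureTheory Filter Topology
open scoped ENNReal

/-- The entropy `H_ν(⋁_{j ∈ E} S^{-j} Q)` of the join of the partition `Q` along the finite
set of times `E`, with respect to the measure `ν` (convention `0 log 0 = 0`). -/
noncomputable def entJoinF {X : Type*} [MeasurableSpace X] (ν : Measure X) (S : X → X)
    {k : ℕ} (Q : Fin k → Set X) (E : Finset ℕ) : ℝ :=
  ∑ c : {j // j ∈ E} → Fin k,
    Real.negMulLog ((ν (⋂ j : {j // j ∈ E}, S^[(j : ℕ)] ⁻¹' Q (c j))).toReal)

/-
For each residue class `a` mod `m`, cover `E` by the windows `[j, j + m)` starting at the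
points `j ∈ E` with `j ≡ a`, plus the points of `E` left uncovered. Entropy of joins is
subadditive, the window at `j` contributes at most `H_{T^j_*μ}(𝒬^m)`, and each uncovered point at
most `log #𝒬`. Summing over the `m` residues counts every `j ∈ E` once, and concavity of entropy
in the measure bounds `∑_{j ∈ E} H_{T^j_*μ}(𝒬^m)` by `#E · H_{μ^E}(𝒬^m)`. An uncovered point
lies less than `m` steps after the start of its run of consecutive elements of `E`, and run starts
are exactly the points of `E \ (E + 1)`; so each residue leaves at most `m · #(E \ (E + 1))`
uncovered points.
-/

open Real Set

theorem Real.negMulLog_add_mul_log_le {p q : ℝ} (hp : 0 ≤ p) (hq : 0 ≤ q) (hpq : 0 < p → 0 < q) :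
    negMulLog p + p * log q ≤ q - p := by
  rcases hp.eq_or_lt with rfl | hp
  · simpa using hq
  have hq := hpq hp
  have hlog := log_le_sub_one_of_pos (div_pos hq hp)
  rw [log_div hq.ne' hp.ne'] at hlog
  calc negMulLog p + p * log q = p * (log q - log p) := by rw [negMulLog]; ring
    _ ≤ p * (q / p - 1) := mul_le_mul_of_nonneg_left hlog hp.le
    _ = q - p := by field_simp

theorem Real.sum_negMulLog_le_sum_neg_mul_log {ι : Type*} [Fintype ι] {p q : ι → ℝ}
    (hp : ∀ i, 0 ≤ p i) (hq : ∀ i, 0 ≤ q i) (hpq : ∀ i, 0 < p i → 0 < q i)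
    (hsum : ∑ i, q i ≤ ∑ i, p i) :
    ∑ i, negMulLog (p i) ≤ ∑ i, -(p i * log (q i)) := by
  have h := Finset.sum_le_sum fun i (_ : i ∈ Finset.univ) =>
    negMulLog_add_mul_log_le (hp i) (hq i) (hpq i)
  rw [Finset.sum_add_distrib, Finset.sum_sub_distrib] at h
  rw [Finset.sum_neg_distrib]
  linarith

theorem Real.sum_negMulLog_le_log_card {ι : Type*} [Fintype ι] {p : ι → ℝ}
    (hp : ∀ i, 0 ≤ p i) (h1 : ∑ i, p i = 1) :
    ∑ i, negMulLog (p i) ≤ log (Fintype.card ι) := by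
  have hcard : (0 : ℝ) < Fintype.card ι := by
    rcases isEmpty_or_nonempty ι with _ | _
    · simp at h1
    · exact_mod_cast Fintype.card_pos
  calc ∑ i, negMulLog (p i) ≤ ∑ i, -(p i * log (Fintype.card ι : ℝ)⁻¹) :=
        sum_negMulLog_le_sum_neg_mul_log hp (fun _ => by positivity) (fun _ _ => by positivity)
          (by simp [h1, hcard.ne'])
    _ = log (Fintype.card ι) := by
        simp only [log_inv, mul_neg, neg_neg, ← Finset.sum_mul, h1, one_mul]

theorem Real.sum_negMulLog_le_add_of_marginals {ι κ : Type*} [Fintype ι] [Fintype κ]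
    {M : ι × κ → ℝ} {p : ι → ℝ} {q : κ → ℝ} (hM : ∀ x, 0 ≤ M x)
    (hp : ∀ i, ∑ j, M (i, j) = p i) (hq : ∀ j, ∑ i, M (i, j) = q j) (h1 : ∑ i, p i = 1) :
    ∑ x, negMulLog (M x) ≤ ∑ i, negMulLog (p i) + ∑ j, negMulLog (q j) := by
  have hMp : ∀ x, M x ≤ p x.1 := fun x => hp x.1 ▸
    Finset.single_le_sum (fun j _ => hM (x.1, j)) (Finset.mem_univ x.2)
  have hMq : ∀ x, M x ≤ q x.2 := fun x => hq x.2 ▸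
    Finset.single_le_sum (fun i _ => hM (i, x.2)) (Finset.mem_univ x.1)
  have hq1 : ∑ j, q j = 1 := by
    simp only [← hq, ← hp] at h1 ⊢
    rwa [Finset.sum_comm]
  have hlog : ∀ x, M x * log (p x.1 * q x.2) = M x * log (p x.1) + M x * log (q x.2) := by
    intro x
    rcases (hM x).eq_or_lt with h | h
    · simp [← h]
    · rw [log_mul ((h.trans_le (hMp x)).ne') ((h.trans_le (hMq x)).ne'), mul_add]
  calc ∑ x, negMulLog (M x) ≤ ∑ x, -(M x * log (p x.1 * q x.2)) := by
        refine sum_negMulLog_le_sum_neg_mul_log hM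
          (fun x => mul_nonneg ((hM x).trans (hMp x)) ((hM x).trans (hMq x)))
          (fun x h => mul_pos (h.trans_le (hMp x)) (h.trans_le (hMq x))) ?_
        rw [Fintype.sum_prod_type, ← Fintype.sum_mul_sum, h1, hq1]
        simp [Fintype.sum_prod_type, hp, h1]
    _ = ∑ i, negMulLog (p i) + ∑ j, negMulLog (q j) := by
        simp only [hlog, neg_add, Finset.sum_add_distrib, Fintype.sum_prod_type]
        rw [Finset.sum_comm (f := fun i j => -(M (i, j) * log (q j)))]
        simp only [← Finset.sum_mul, Finset.sum_neg_distrib, hp, hq, negMulLog, neg_mul]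

theorem Real.negMulLog_sum_le_sum_negMulLog {ι : Type*} (s : Finset ι) {p : ι → ℝ}
    (hp : ∀ i ∈ s, 0 ≤ p i) : negMulLog (∑ i ∈ s, p i) ≤ ∑ i ∈ s, negMulLog (p i) := by
  simp only [negMulLog_eq_neg]
  rw [Finset.sum_mul, ← Finset.sum_neg_distrib]
  refine Finset.sum_le_sum fun i hi => neg_le_neg ?_
  rcases (hp i hi).eq_or_lt with h | h
  · simp [← h]
  · exact mul_le_mul_of_nonneg_left (log_le_log h (Finset.single_le_sum hp hi)) h.le

section

variable {X : Type*} [MeasurableSpace X]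

def IsMeasurablePartition {ι : Type*} (P : ι → Set X) : Prop :=
  (∀ i, MeasurableSet (P i)) ∧ (Pairwise fun i j => Disjoint (P i) (P j)) ∧ (⋃ i, P i) = univ

noncomputable def partitionEntropy (ν : Measure X) {ι : Type*} [Fintype ι] (P : ι → Set X) : ℝ :=
  ∑ i, negMulLog (ν (P i)).toReal

namespace IsMeasurablePartition

variable {ι κ : Type*} {P : ι → Set X} {R : κ → Set X}

theorem exists_mem (hP : IsMeasurablePartition P) (x : X) : ∃ i, x ∈ P i :=
  mem_iUnion.mp (hP.2.2 ▸ mem_univ x)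

theorem preimage {Y : Type*} [MeasurableSpace Y] {f : Y → X} (hf : Measurable f)
    (hP : IsMeasurablePartition P) : IsMeasurablePartition fun i => f ⁻¹' P i :=
  ⟨fun i => hf (hP.1 i), fun _ _ h => (hP.2.1 h).preimage f,
    by rw [← preimage_iUnion, hP.2.2, preimage_univ]⟩

theorem iInter {J : Type*} [Countable J] {P : J → ι → Set X}
    (hP : ∀ j, IsMeasurablePartition (P j)) :
    IsMeasurablePartition fun c : J → ι => ⋂ j, P j (c j) := by
  refine ⟨fun c => .iInter fun j => (hP j).1 (c j), fun c c' hne => ?_, ?_⟩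
  · obtain ⟨j, hj⟩ := Function.ne_iff.mp hne
    exact ((hP j).2.1 hj).mono (iInter_subset _ j) (iInter_subset _ j)
  · refine eq_univ_of_forall fun x => mem_iUnion.mpr ?_
    choose c hc using fun j => (hP j).exists_mem x
    exact ⟨c, mem_iInter.mpr hc⟩

theorem inter (hP : IsMeasurablePartition P) (hR : IsMeasurablePartition R) :
    IsMeasurablePartition fun x : ι × κ => P x.1 ∩ R x.2 := by
  refine ⟨fun x => (hP.1 x.1).inter (hR.1 x.2), fun x y hne => ?_, ?_⟩
  · by_cases h : x.1 = y.1
    · exact (hR.2.1 fun h' => hne (Prod.ext h h')).mono inter_subset_right inter_subset_right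
    · exact (hP.2.1 h).mono inter_subset_left inter_subset_left
  · refine eq_univ_of_forall fun x => mem_iUnion.mpr ?_
    obtain ⟨i, hi⟩ := hP.exists_mem x
    obtain ⟨j, hj⟩ := hR.exists_mem x
    exact ⟨(i, j), hi, hj⟩

theorem sum_measure_inter [Fintype ι] (hP : IsMeasurablePartition P) (ν : Measure X) {s : Set X}
    (hs : MeasurableSet s) : ∑ i, ν (s ∩ P i) = ν s := by
  rw [← tsum_fintype (L := .unconditional ι), ← measure_iUnion
    (fun i j h => (hP.2.1 h).mono inter_subset_right inter_subset_right)
    (fun i => hs.inter (hP.1 i)), ← inter_iUnion, hP.2.2, inter_univ]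

theorem sum_measure_inter_toReal [Fintype ι] (hP : IsMeasurablePartition P) (ν : Measure X)
    [IsFiniteMeasure ν] {s : Set X} (hs : MeasurableSet s) :
    ∑ i, (ν (s ∩ P i)).toReal = (ν s).toReal := by
  rw [← ENNReal.toReal_sum fun i _ => measure_ne_top ν _, hP.sum_measure_inter ν hs]

theorem sum_measure_toReal [Fintype ι] (hP : IsMeasurablePartition P) (ν : Measure X)
    [IsProbabilityMeasure ν] : ∑ i, (ν (P i)).toReal = 1 := by
  simpa using hP.sum_measure_inter_toReal ν .univ

end IsMeasurablePartition

section Entropy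

variable {ι κ : Type*} [Fintype ι] [Fintype κ] {P : ι → Set X} {R : κ → Set X}
  {ν : Measure X}

theorem partitionEntropy_le_log_card [IsProbabilityMeasure ν] (hP : IsMeasurablePartition P) :
    partitionEntropy ν P ≤ log (Fintype.card ι) :=
  sum_negMulLog_le_log_card (fun _ => ENNReal.toReal_nonneg) (hP.sum_measure_toReal ν)

theorem partitionEntropy_inter_le [IsProbabilityMeasure ν] (hP : IsMeasurablePartition P)
    (hR : IsMeasurablePartition R) :
    partitionEntropy ν (fun x : ι × κ => P x.1 ∩ R x.2) ≤
      partitionEntropy ν P + partitionEntropy ν R := by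
  refine sum_negMulLog_le_add_of_marginals (fun _ => ENNReal.toReal_nonneg)
    (fun i => hR.sum_measure_inter_toReal ν (hP.1 i)) (fun j => ?_) (hP.sum_measure_toReal ν)
  simp_rw [inter_comm (P _)]
  exact hP.sum_measure_inter_toReal ν (hR.1 j)

theorem partitionEntropy_le_of_refines [IsFiniteMeasure ν]
    (hP : Pairwise fun i j => Disjoint (P i) (P j)) (hR : IsMeasurablePartition R)
    (f : κ → ι) (hf : ∀ c, R c ⊆ P (f c)) :
    partitionEntropy ν P ≤ partitionEntropy ν R := by
  classical
  have hPR : ∀ i, P i = ⋃ c ∈ Finset.univ.filter (f · = i), R c := by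
    refine fun i => Subset.antisymm (fun x hx => ?_) (iUnion₂_subset fun c hc => ?_)
    · obtain ⟨c, hc⟩ := hR.exists_mem x
      have hfc : f c = i := by_contra fun h => (hP h).ne_of_mem (hf c hc) hx rfl
      exact mem_biUnion (Finset.mem_filter.mpr ⟨Finset.mem_univ c, hfc⟩) hc
    · exact (Finset.mem_filter.mp hc).2 ▸ hf c
  calc partitionEntropy ν P
      = ∑ i, negMulLog (∑ c ∈ Finset.univ.filter (f · = i), (ν (R c)).toReal) := by
        refine Finset.sum_congr rfl fun i _ => ?_
        rw [hPR i, measure_biUnion_finset (fun c _ c' _ h => hR.2.1 h) fun c _ => hR.1 c,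
          ENNReal.toReal_sum fun c _ => measure_ne_top ν _]
    _ ≤ ∑ i, ∑ c ∈ Finset.univ.filter (f · = i), negMulLog (ν (R c)).toReal :=
        Finset.sum_le_sum fun i _ =>
          negMulLog_sum_le_sum_negMulLog _ fun _ _ => ENNReal.toReal_nonneg
    _ = partitionEntropy ν R :=
        Finset.sum_fiberwise_of_maps_to (fun c _ => Finset.mem_univ (f c)) _

theorem sum_partitionEntropy_le_card_mul {α ι : Type*} [Fintype ι] (s : Finset α)
    (ν : α → Measure X) [∀ j, IsFiniteMeasure (ν j)] (P : ι → Set X) :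
    ∑ j ∈ s, partitionEntropy (ν j) P ≤
      s.card * partitionEntropy ((s.card : ℝ≥0∞)⁻¹ • ∑ j ∈ s, ν j) P := by
  rcases s.eq_empty_or_nonempty with rfl | hs
  · simp
  have hcard : (0 : ℝ) < s.card := by exact_mod_cast hs.card_pos
  simp only [partitionEntropy, Finset.mul_sum]
  rw [Finset.sum_comm]
  refine Finset.sum_le_sum fun i _ => ?_
  have hjensen := concaveOn_negMulLog.le_map_sum (t := s) (w := fun _ => (s.card : ℝ)⁻¹)
    (p := fun j => (ν j (P i)).toReal) (fun _ _ => by positivity) (by simp [hcard.ne'])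
    (fun _ _ => mem_Ici.mpr ENNReal.toReal_nonneg)
  have havg : (((s.card : ℝ≥0∞)⁻¹ • ∑ j ∈ s, ν j) (P i)).toReal =
      ∑ j ∈ s, (s.card : ℝ)⁻¹ • (ν j (P i)).toReal := by
    rw [Measure.smul_apply, Measure.finsetSum_apply, smul_eq_mul, ENNReal.toReal_mul,
      ENNReal.toReal_inv, ENNReal.toReal_natCast,
      ENNReal.toReal_sum fun j _ => measure_ne_top _ _, Finset.mul_sum]
    rfl
  rw [havg]
  calc ∑ j ∈ s, negMulLog (ν j (P i)).toReal
      = s.card * ∑ j ∈ s, (s.card : ℝ)⁻¹ • negMulLog (ν j (P i)).toReal := by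
        rw [← Finset.smul_sum, smul_eq_mul, mul_inv_cancel_left₀ hcard.ne']
    _ ≤ s.card * negMulLog (∑ j ∈ s, (s.card : ℝ)⁻¹ • (ν j (P i)).toReal) :=
        mul_le_mul_of_nonneg_left hjensen hcard.le

end Entropy

theorem Nat.exists_mod_eq_and_le_lt_add {a m i : ℕ} (ha : a < m) (hai : a ≤ i) :
    ∃ j, j % m = a ∧ j ≤ i ∧ i < j + m := by
  refine ⟨a + m * ((i - a) / m), by rw [Nat.add_mul_mod_self_left, Nat.mod_eq_of_lt ha], ?_⟩
  have := Nat.div_add_mod (i - a) m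
  have := Nat.mod_lt (i - a) (by omega : 0 < m)
  omega

theorem exists_run_start {E : Finset ℕ} {i : ℕ} (hi : i ∈ E) :
    ∃ b ∈ E \ E.image (· + 1), b ≤ i ∧ Finset.Icc b i ⊆ E := by
  induction i using Nat.strong_induction_on with
  | _ i ih =>
  by_cases h : i ∈ E.image (· + 1)
  · obtain ⟨i', hi', rfl⟩ := Finset.mem_image.mp h
    obtain ⟨b, hb, hbi, hsub⟩ := ih i' (by omega) hi'
    refine ⟨b, hb, by omega, fun t ht => ?_⟩
    rcases (Finset.mem_Icc.mp ht).2.eq_or_lt with rfl | hlt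
    · exact hi
    · exact hsub (Finset.mem_Icc.mpr ⟨(Finset.mem_Icc.mp ht).1, by omega⟩)
  · exact ⟨i, Finset.mem_sdiff.mpr ⟨hi, h⟩, le_rfl, by simpa using hi⟩

def residueWindows (E : Finset ℕ) (m a : ℕ) : Finset ℕ :=
  (E.filter (· % m = a)).biUnion fun j => Finset.Ico j (j + m)

theorem card_sdiff_residueWindows_le (E : Finset ℕ) {m a : ℕ} (ha : a < m) :
    (E \ residueWindows E m a).card ≤ m * (E \ E.image (· + 1)).card := by
  calc (E \ residueWindows E m a).card
      ≤ ((E \ E.image (· + 1)).biUnion fun b => Finset.Ico b (b + m)).card :=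
        Finset.card_le_card fun i hi => ?_
    _ ≤ ∑ b ∈ E \ E.image (· + 1), (Finset.Ico b (b + m)).card := Finset.card_biUnion_le
    _ = m * (E \ E.image (· + 1)).card := by simp [mul_comm]
  obtain ⟨hiE, hnot⟩ := Finset.mem_sdiff.mp hi
  obtain ⟨b, hb, hbi, hsub⟩ := exists_run_start hiE
  refine Finset.mem_biUnion.mpr ⟨b, hb, Finset.mem_Ico.mpr ⟨hbi, ?_⟩⟩
  by_contra! hbm
  obtain ⟨j, hja, hji, hij⟩ := Nat.exists_mod_eq_and_le_lt_add ha (by omega : a ≤ i)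
  exact hnot (Finset.mem_biUnion.mpr ⟨j, Finset.mem_filter.mpr
    ⟨hsub (Finset.mem_Icc.mpr ⟨by omega, hji⟩), hja⟩, Finset.mem_Ico.mpr ⟨hji, hij⟩⟩)

section Join

variable {ι : Type*} {k : ℕ} {S : X → X} {Q : Fin k → Set X} {ν : Measure X}

def joinAtom (S : X → X) (Q : ι → Set X) (E : Finset ℕ) (c : E → ι) : Set X :=
  ⋂ j : E, S^[j] ⁻¹' Q (c j)

theorem entJoinF_eq_partitionEntropy (ν : Measure X) (S : X → X) (Q : Fin k → Set X)
    (E : Finset ℕ) : entJoinF ν S Q E = partitionEntropy ν (joinAtom S Q E) := rfl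

theorem isMeasurablePartition_joinAtom {Q : ι → Set X} (hS : Measurable S)
    (hQ : IsMeasurablePartition Q) (E : Finset ℕ) : IsMeasurablePartition (joinAtom S Q E) :=
  IsMeasurablePartition.iInter (P := fun (j : E) i => S^[j] ⁻¹' Q i) fun j =>
    hQ.preimage (hS.iterate j)

variable (hS : Measurable S) (hQ : IsMeasurablePartition Q)
include hS hQ

theorem entJoinF_le_card_mul_log [IsProbabilityMeasure ν] (E : Finset ℕ) :
    entJoinF ν S Q E ≤ E.card * log k := by
  refine (partitionEntropy_le_log_card (isMeasurablePartition_joinAtom hS hQ E)).trans_eq ?_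
  rw [Fintype.card_fun, Fintype.card_fin, Fintype.card_coe, Nat.cast_pow, log_pow]

theorem entJoinF_mono [IsFiniteMeasure ν] {A B : Finset ℕ} (hAB : A ⊆ B) :
    entJoinF ν S Q A ≤ entJoinF ν S Q B :=
  partitionEntropy_le_of_refines (isMeasurablePartition_joinAtom hS hQ A).2.1
    (isMeasurablePartition_joinAtom hS hQ B) (fun c j => c ⟨j, hAB j.2⟩)
    fun _ => subset_iInter fun _ => iInter_subset _ _

theorem entJoinF_union_le [IsProbabilityMeasure ν] (A B : Finset ℕ) :
    entJoinF ν S Q (A ∪ B) ≤ entJoinF ν S Q A + entJoinF ν S Q B := by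
  let glue (x : (A → Fin k) × (B → Fin k)) (j : ↥(A ∪ B)) : Fin k :=
    if h : (j : ℕ) ∈ A then x.1 ⟨j, h⟩ else x.2 ⟨j, (Finset.mem_union.mp j.2).resolve_left h⟩
  have hglue : ∀ x, joinAtom S Q A x.1 ∩ joinAtom S Q B x.2 ⊆ joinAtom S Q (A ∪ B) (glue x) := by
    rintro x y ⟨hA, hB⟩
    refine mem_iInter.mpr fun j => ?_
    by_cases h : (j : ℕ) ∈ A
    · simpa [glue, h] using mem_iInter.mp hA ⟨j, h⟩
    · simpa [glue, h] using mem_iInter.mp hB ⟨j, (Finset.mem_union.mp j.2).resolve_left h⟩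
  have hA := isMeasurablePartition_joinAtom hS hQ A
  have hB := isMeasurablePartition_joinAtom hS hQ B
  calc entJoinF ν S Q (A ∪ B)
      ≤ partitionEntropy ν fun x : (A → Fin k) × (B → Fin k) =>
          joinAtom S Q A x.1 ∩ joinAtom S Q B x.2 :=
        partitionEntropy_le_of_refines (isMeasurablePartition_joinAtom hS hQ _).2.1
          (hA.inter hB) glue hglue
    _ ≤ entJoinF ν S Q A + entJoinF ν S Q B := partitionEntropy_inter_le hA hB

theorem entJoinF_biUnion_le [IsProbabilityMeasure ν] {α : Type*} [DecidableEq α] (s : Finset α)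
    (f : α → Finset ℕ) : entJoinF ν S Q (s.biUnion f) ≤ ∑ j ∈ s, entJoinF ν S Q (f j) := by
  induction s using Finset.induction_on with
  | empty => simpa using entJoinF_le_card_mul_log hS hQ (ν := ν) ∅
  | insert a s ha ih =>
    rw [Finset.biUnion_insert, Finset.sum_insert ha]
    exact (entJoinF_union_le hS hQ _ _).trans (add_le_add_right ih _)

theorem entJoinF_map_addRightEmbedding_le [IsFiniteMeasure ν] (E : Finset ℕ) (j : ℕ) :
    entJoinF ν S Q (E.map (addRightEmbedding j)) ≤ entJoinF (ν.map S^[j]) S Q E := by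
  have hsub : ∀ i : ↥(E.map (addRightEmbedding j)), (i : ℕ) - j ∈ E := fun i => by
    obtain ⟨a, ha, hai⟩ := Finset.mem_map.mp i.2
    simpa [← hai] using ha
  have hpre : IsMeasurablePartition fun c => S^[j] ⁻¹' joinAtom S Q E c :=
    (isMeasurablePartition_joinAtom hS hQ E).preimage (hS.iterate j)
  have hmap : entJoinF (ν.map S^[j]) S Q E =
      partitionEntropy ν fun c => S^[j] ⁻¹' joinAtom S Q E c := by
    simp only [entJoinF_eq_partitionEntropy, partitionEntropy,
      Measure.map_apply (hS.iterate j) ((isMeasurablePartition_joinAtom hS hQ E).1 _)]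
  rw [hmap]
  refine partitionEntropy_le_of_refines (isMeasurablePartition_joinAtom hS hQ _).2.1 hpre
    (fun c i => c ⟨i - j, hsub i⟩) fun c x hx => mem_iInter.mpr fun i => ?_
  have hij : (i : ℕ) - j + j = i := by
    obtain ⟨a, -, hai⟩ := Finset.mem_map.mp i.2
    simp [← hai]
  have := mem_iInter.mp hx ⟨i - j, hsub i⟩
  rwa [mem_preimage, ← Function.iterate_add_apply, hij] at this

theorem entJoinF_le_sum_residue [IsProbabilityMeasure ν] (E : Finset ℕ) {m a : ℕ} (ha : a < m) :
    entJoinF ν S Q E ≤ ∑ j ∈ E.filter (· % m = a), entJoinF (ν.map S^[j]) S Q (Finset.range m)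
      + m * (E \ E.image (· + 1)).card * log k := by
  have hwindow : ∀ j, Finset.Ico j (j + m) = (Finset.range m).map (addRightEmbedding j) := by
    intro j
    rw [Finset.range_eq_Ico, Finset.map_add_right_Ico, zero_add, add_comm]
  calc entJoinF ν S Q E
      ≤ entJoinF ν S Q (residueWindows E m a ∪ (E \ residueWindows E m a)) :=
        entJoinF_mono hS hQ le_sup_sdiff
    _ ≤ entJoinF ν S Q (residueWindows E m a) + entJoinF ν S Q (E \ residueWindows E m a) :=
        entJoinF_union_le hS hQ _ _
    _ ≤ ∑ j ∈ E.filter (· % m = a), entJoinF (ν.map S^[j]) S Q (Finset.range m)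
          + m * (E \ E.image (· + 1)).card * log k := by
        refine add_le_add ((entJoinF_biUnion_le hS hQ _ _).trans (Finset.sum_le_sum fun j _ => ?_))
          ((entJoinF_le_card_mul_log hS hQ _).trans ?_)
        · rw [hwindow]
          exact entJoinF_map_addRightEmbedding_le hS hQ _ j
        · gcongr
          exact_mod_cast card_sdiff_residueWindows_le E ha

theorem mul_entJoinF_le [IsProbabilityMeasure ν] (E : Finset ℕ) {m : ℕ} (hm : 0 < m) :
    m * entJoinF ν S Q E ≤ ∑ j ∈ E, entJoinF (ν.map S^[j]) S Q (Finset.range m)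
      + m * (m * (E \ E.image (· + 1)).card * log k) := by
  have h := Finset.sum_le_sum fun a (ha : a ∈ Finset.range m) =>
    entJoinF_le_sum_residue hS hQ (ν := ν) E (Finset.mem_range.mp ha)
  rwa [Finset.sum_const, Finset.card_range, nsmul_eq_mul, Finset.sum_add_distrib,
    Finset.sum_fiberwise_of_maps_to, Finset.sum_const, Finset.card_range, nsmul_eq_mul] at h
  exact fun j _ => Finset.mem_range.mpr (Nat.mod_lt j hm)

end Join

end

theorem stmt6_general {X : Type*} [MetricSpace X] [MeasurableSpace X] [BorelSpace X]
    (T : X ≃ₜ X) (μ : Measure X) [IsProbabilityMeasure μ]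
    (E : Finset ℕ) (hE : E.Nonempty)
    {k : ℕ} (Q : Fin k → Set X) (hQ : IsFinPartition Q)
    (m : ℕ) (hm : 1 ≤ m)
    (μE : Measure X)
    (hμE : μE = (E.card : ℝ≥0∞)⁻¹ • ∑ j ∈ E, Measure.map ((⇑T)^[j]) μ) :
    (1 / (E.card : ℝ)) * entJoinF μ (⇑T) Q E ≤
      (1 / (m : ℝ)) * entJoinF μE (⇑T) Q (Finset.range m)
        + 6 * (m : ℝ) * (((symmDiff (E.image (· + 1)) E).card : ℝ) / (E.card : ℝ))
            * Real.log k := by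
  have hS : Measurable T := T.continuous.measurable
  have hN : (0 : ℝ) < E.card := by exact_mod_cast hE.card_pos
  have hblocks := mul_entJoinF_le hS hQ (ν := μ) E hm
  have havg : ∑ j ∈ E, entJoinF (μ.map T^[j]) T Q (Finset.range m) ≤
      E.card * entJoinF μE T Q (Finset.range m) :=
    hμE ▸ sum_partitionEntropy_le_card_mul E (fun j => μ.map T^[j]) (joinAtom T Q _)
  have hboundary : ((E \ E.image (· + 1)).card : ℝ) ≤ (symmDiff (E.image (· + 1)) E).card := by
    exact_mod_cast Finset.card_le_card le_sup_right
  have hpenalty : (m : ℝ) * (m * (E \ E.image (· + 1)).card * log k) ≤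
      6 * m ^ 2 * (symmDiff (E.image (· + 1)) E).card * log k := by
    have hlog := log_natCast_nonneg k
    nlinarith [mul_le_mul_of_nonneg_right hboundary hlog, sq_nonneg (m : ℝ),
      mul_nonneg (Nat.cast_nonneg (symmDiff (E.image (· + 1)) E).card) hlog]
  rw [one_div_mul_eq_div, div_le_iff₀ hN]
  field_simp
  linarith

theorem stmt6 {X : Type*} [MetricSpace X] [CompactSpace X] [MeasurableSpace X] [BorelSpace X]
    (T : X ≃ₜ X) (μ : Measure X) [IsProbabilityMeasure μ]
    (E : Finset ℕ) (hE : E.Nonempty)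
    {k : ℕ} (Q : Fin k → Set X) (hQ : IsFinPartition Q)
    (m : ℕ) (hm : 1 ≤ m)
    (μE : Measure X)
    (hμE : μE = (E.card : ℝ≥0∞)⁻¹ • ∑ j ∈ E, Measure.map ((⇑T)^[j]) μ) :
    (1 / (E.card : ℝ)) * entJoinF μ (⇑T) Q E ≤
      (1 / (m : ℝ)) * entJoinF μE (⇑T) Q (Finset.range m)
        + 6 * (m : ℝ) * (((symmDiff (E.image (· + 1)) E).card : ℝ) / (E.card : ℝ))
            * Real.log k :=
  stmt6_general T μ E hE Q hQ m hm μE hμE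
end

section
/- Fix an integer d ≥ 1 and a real r > 1. For every ε > 0, every C^r bounded embedded curve σ : [0,1] → ℝ^d, and every y ∈ ℝ^d, there exists an affine map θ : [0,1] → [0,1] such that: (1) ‖D(σ∘θ)‖_0 ≤ 3ε; (2) σ^{−1}(B̄(y,ε)) ⊆ θ([0,1]), where B̄(y,ε) is the closed ball of radius ε around y; (3) |Dθ| ≤ 1. -/
open MeasureTheory Filter Topology

/-- `sup01 G = sup_{t ∈ [0,1]} ‖G t‖`. -/
noncomputable def sup01 {F : Type*} [NormedAddCommGroup F] (G : ℝ → F) : ℝ :=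
  sSup ((fun t => ‖G t‖) '' Set.Icc (0 : ℝ) 1)

/-- A `C^r` embedded curve: injective on `[0,1]` with nonvanishing derivative. -/
def IsEmbeddedCurve {d : ℕ} (σ : ℝ → EuclideanSpace ℝ (Fin d)) : Prop :=
  Set.InjOn σ (Set.Icc 0 1) ∧ ∀ t ∈ Set.Icc (0 : ℝ) 1, deriv σ t ≠ 0

/-- A curve is `C^r` bounded: it is `C^⌊r⌋`, its derivatives of orders `2,…,⌊r⌋` are bounded
by `(1/6)‖Dσ‖₀` on `[0,1]`, and (if `r` is not an integer) the `α`-Hölder seminorm of the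
`⌊r⌋`-th derivative is bounded by `(1/6)‖Dσ‖₀`, where `α = r − ⌊r⌋`. -/
def CrBoundedCurve (r : ℝ) {d : ℕ} (σ : ℝ → EuclideanSpace ℝ (Fin d)) : Prop :=
  ContDiff ℝ (⌊r⌋₊ : ℕ∞) σ ∧
  (∀ k : ℕ, 2 ≤ k → k ≤ ⌊r⌋₊ → sup01 (iteratedDeriv k σ) ≤ (1 / 6) * sup01 (deriv σ)) ∧
  ((⌊r⌋₊ : ℝ) < r → ∀ s ∈ Set.Icc (0 : ℝ) 1, ∀ t ∈ Set.Icc (0 : ℝ) 1,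
    ‖iteratedDeriv ⌊r⌋₊ σ s - iteratedDeriv ⌊r⌋₊ σ t‖
      ≤ (1 / 6) * sup01 (deriv σ) * |s - t| ^ (r - (⌊r⌋₊ : ℝ)))

/-! The `C^r` bound makes the oscillation of `Dσ` on `[0,1]` at most `‖Dσ‖₀ / 6` (through the
Hölder condition when `⌊r⌋ = 1`, through the bound on `D²σ` otherwise). Hence
`‖Dσ‖ ≥ 5‖Dσ‖₀ / 6` everywhere and, comparing `σ` with its tangent line,
`‖σ t - σ s‖ ≥ 2‖Dσ‖₀ |t - s| / 3`. So `σ⁻¹(B̄(y, ε))` has diameter at most `3ε / ‖Dσ‖₀` and fits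
in an interval `[b, b + a]` with `a = min 1 (3ε / ‖Dσ‖₀)`, the image of `θ t = a t + b`, and then
`‖D(σ ∘ θ)‖₀ ≤ a ‖Dσ‖₀ ≤ 3ε`. -/

open Set

section Sup01

variable {F : Type*} [NormedAddCommGroup F] {G : ℝ → F}

lemma norm_le_sup01 (hG : ContinuousOn G (Icc 0 1)) {t : ℝ} (ht : t ∈ Icc (0 : ℝ) 1) :
    ‖G t‖ ≤ sup01 G :=
  le_csSup (isCompact_Icc.image_of_continuousOn hG.norm).bddAbove ⟨t, ht, rfl⟩

lemma sup01_le {C : ℝ} (h : ∀ t ∈ Icc (0 : ℝ) 1, ‖G t‖ ≤ C) : sup01 G ≤ C :=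
  csSup_le ((nonempty_Icc.2 zero_le_one).image _) (forall_mem_image.2 h)

lemma sup01_le_norm_add {δ : ℝ} (h : ∀ s ∈ Icc (0 : ℝ) 1, ∀ t ∈ Icc (0 : ℝ) 1, ‖G s - G t‖ ≤ δ)
    {t : ℝ} (ht : t ∈ Icc (0 : ℝ) 1) : sup01 G ≤ ‖G t‖ + δ :=
  sup01_le fun s hs => by linarith [norm_le_norm_add_norm_sub' (G s) (G t), h s hs t ht]

lemma sup01_nonneg (G : ℝ → F) : 0 ≤ sup01 G :=
  Real.sSup_nonneg (forall_mem_image.2 fun _ _ => norm_nonneg _)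

end Sup01

lemma abs_sub_le_one_of_mem_Icc {s t : ℝ} (hs : s ∈ Icc (0 : ℝ) 1) (ht : t ∈ Icc (0 : ℝ) 1) :
    |s - t| ≤ 1 :=
  abs_sub_le_iff.2 ⟨by linarith [hs.2, ht.1], by linarith [ht.2, hs.1]⟩

section ReverseMeanValue

variable {E : Type*} [NormedAddCommGroup E] [NormedSpace ℝ E] {f : ℝ → E} {s : Set ℝ}
  {c : E} {δ x y : ℝ}

lemma Convex.norm_image_sub_sub_smul_le (hs : Convex ℝ s) (hf : ∀ u ∈ s, DifferentiableAt ℝ f u)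
    (bound : ∀ u ∈ s, ‖deriv f u - c‖ ≤ δ) (hx : x ∈ s) (hy : y ∈ s) :
    ‖f y - f x - (y - x) • c‖ ≤ δ * |y - x| := by
  have hg : ∀ u ∈ s, HasDerivAt (fun u => f u - u • c) (deriv f u - c) u := fun u hu =>
    (hf u hu).hasDerivAt.sub (by simpa using (hasDerivAt_id u).smul_const c)
  have := hs.norm_image_sub_le_of_norm_deriv_le (fun u hu => (hg u hu).differentiableAt)
    (fun u hu => (hg u hu).deriv ▸ bound u hu) hx hy
  rwa [sub_smul, ← Real.norm_eq_abs, show f y - f x - (y • c - x • c) = f y - y • c - (f x - x • c)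
    by abel]

lemma Convex.mul_abs_sub_le_norm_image_sub (hs : Convex ℝ s)
    (hf : ∀ u ∈ s, DifferentiableAt ℝ f u) (bound : ∀ u ∈ s, ‖deriv f u - c‖ ≤ δ)
    (hx : x ∈ s) (hy : y ∈ s) : (‖c‖ - δ) * |y - x| ≤ ‖f y - f x‖ := by
  have htangent := hs.norm_image_sub_sub_smul_le hf bound hx hy
  have hreverse := norm_sub_norm_le ((y - x) • c) (f y - f x)
  rw [norm_smul, Real.norm_eq_abs, norm_sub_rev ((y - x) • c)] at hreverse
  linarith

end ReverseMeanValue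

section AffineReparametrization

variable {E : Type*} [NormedAddCommGroup E] [NormedSpace ℝ E]

lemma sup01_deriv_comp_affine_le {f : ℝ → E} (hf : Differentiable ℝ f)
    (hf' : ContinuousOn (deriv f) (Icc 0 1)) {a b : ℝ}
    (hmaps : MapsTo (fun t => a * t + b) (Icc 0 1) (Icc 0 1)) :
    sup01 (deriv (f ∘ fun t => a * t + b)) ≤ |a| * sup01 (deriv f) :=
  sup01_le fun t ht => by
    have hθ : HasDerivAt (fun t => a * t + b) a t := by
      simpa using ((hasDerivAt_id t).const_mul a).add_const b
    rw [((hf _).hasDerivAt.scomp t hθ).deriv, norm_smul, Real.norm_eq_abs]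
    gcongr
    exact norm_le_sup01 hf' (hmaps ht)

end AffineReparametrization

lemma exists_subset_Icc_add_of_sub_le {S : Set ℝ} (hS : S ⊆ Icc 0 1) {a : ℝ} (ha : a ≤ 1)
    (hdiam : ∀ s ∈ S, ∀ t ∈ S, t - s ≤ a) : ∃ b, 0 ≤ b ∧ b + a ≤ 1 ∧ S ⊆ Icc b (b + a) := by
  refine ⟨min (sInf S) (1 - a), le_min (Real.sInf_nonneg fun x hx => (hS hx).1) (by linarith),
    by linarith [min_le_right (sInf S) (1 - a)], fun t ht => ⟨?_, ?_⟩⟩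
  · exact (min_le_left _ _).trans (csInf_le ⟨0, fun x hx => (hS hx).1⟩ ht)
  · have : t - a ≤ min (sInf S) (1 - a) :=
      le_min (le_csInf ⟨t, ht⟩ fun s hs => by linarith [hdiam s hs t ht]) (by linarith [(hS ht).2])
    linarith

namespace CrBoundedCurve

variable {r : ℝ} {d : ℕ} {σ : ℝ → EuclideanSpace ℝ (Fin d)}

lemma contDiff_one (hσ : CrBoundedCurve r σ) (hr : 1 < r) : ContDiff ℝ 1 σ :=
  hσ.1.of_le (mod_cast (Nat.one_le_floor_iff r).2 hr.le)

lemma norm_deriv_sub_le_of_floor_eq_one (hσ : CrBoundedCurve r σ) (hr : 1 < r) (h1 : ⌊r⌋₊ = 1)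
    {s t : ℝ} (hs : s ∈ Icc (0 : ℝ) 1) (ht : t ∈ Icc (0 : ℝ) 1) :
    ‖deriv σ s - deriv σ t‖ ≤ sup01 (deriv σ) / 6 := by
  have hholder := hσ.2.2 (by rw [h1]; exact_mod_cast hr) s hs t ht
  rw [h1, iteratedDeriv_one, Nat.cast_one] at hholder
  calc _ ≤ 1 / 6 * sup01 (deriv σ) * |s - t| ^ (r - 1) := hholder
    _ ≤ 1 / 6 * sup01 (deriv σ) * 1 := by
      have hM := sup01_nonneg (deriv σ)
      gcongr
      exact Real.rpow_le_one (abs_nonneg _) (abs_sub_le_one_of_mem_Icc hs ht) (by linarith)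
    _ = _ := by ring

lemma norm_deriv_sub_le_of_two_le_floor (hσ : CrBoundedCurve r σ) (h2 : 2 ≤ ⌊r⌋₊)
    {s t : ℝ} (hs : s ∈ Icc (0 : ℝ) 1) (ht : t ∈ Icc (0 : ℝ) 1) :
    ‖deriv σ s - deriv σ t‖ ≤ sup01 (deriv σ) / 6 := by
  have hC2 : ContDiff ℝ 2 σ := hσ.1.of_le (WithTop.coe_le_coe.2 (Nat.cast_le.2 h2))
  have hC1 : ContDiff ℝ 1 (deriv σ) := ((contDiff_succ_iff_deriv (n := 1)).1 hC2).2.2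
  have bound : ∀ u ∈ Icc (0 : ℝ) 1, ‖deriv (deriv σ) u‖ ≤ sup01 (deriv σ) / 6 := fun u hu => by
    rw [← iteratedDeriv_one, ← iteratedDeriv_succ']
    linarith [norm_le_sup01 (hC2.continuous_iteratedDeriv 2 le_rfl).continuousOn hu,
      hσ.2.1 2 le_rfl h2]
  calc _ ≤ sup01 (deriv σ) / 6 * ‖s - t‖ :=
        (convex_Icc (0 : ℝ) 1).norm_image_sub_le_of_norm_deriv_le
          (fun u _ => hC1.differentiable one_ne_zero u) bound ht hs
    _ ≤ sup01 (deriv σ) / 6 * 1 := by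
      have hM := sup01_nonneg (deriv σ)
      gcongr
      exact abs_sub_le_one_of_mem_Icc hs ht
    _ = _ := mul_one _

lemma norm_deriv_sub_le (hσ : CrBoundedCurve r σ) (hr : 1 < r) :
    ∀ s ∈ Icc (0 : ℝ) 1, ∀ t ∈ Icc (0 : ℝ) 1, ‖deriv σ s - deriv σ t‖ ≤ sup01 (deriv σ) / 6 := by
  intro s hs t ht
  rcases ((Nat.one_le_floor_iff r).2 hr.le).eq_or_lt with h1 | h2
  · exact hσ.norm_deriv_sub_le_of_floor_eq_one hr h1.symm hs ht
  · exact hσ.norm_deriv_sub_le_of_two_le_floor h2 hs ht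

lemma mul_abs_sub_le_norm_sub (hσ : CrBoundedCurve r σ) (hr : 1 < r)
    {s t : ℝ} (hs : s ∈ Icc (0 : ℝ) 1) (ht : t ∈ Icc (0 : ℝ) 1) :
    2 / 3 * sup01 (deriv σ) * |t - s| ≤ ‖σ t - σ s‖ := by
  have hosc := hσ.norm_deriv_sub_le hr
  have hmax : sup01 (deriv σ) ≤ ‖deriv σ s‖ + sup01 (deriv σ) / 6 := sup01_le_norm_add hosc hs
  calc _ ≤ (‖deriv σ s‖ - sup01 (deriv σ) / 6) * |t - s| := by gcongr; linarith
    _ ≤ ‖σ t - σ s‖ := (convex_Icc (0 : ℝ) 1).mul_abs_sub_le_norm_image_sub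
        (fun u _ => (hσ.contDiff_one hr).differentiable one_ne_zero u) (fun u hu => hosc u hu s hs)
        hs ht

lemma mul_abs_sub_le_of_mem_closedBall (hσ : CrBoundedCurve r σ) (hr : 1 < r)
    {y : EuclideanSpace ℝ (Fin d)} {ε s t : ℝ} (hs : s ∈ Icc (0 : ℝ) 1) (ht : t ∈ Icc (0 : ℝ) 1)
    (hsy : σ s ∈ Metric.closedBall y ε) (hty : σ t ∈ Metric.closedBall y ε) :
    sup01 (deriv σ) * |t - s| ≤ 3 * ε := by
  have hlow := hσ.mul_abs_sub_le_norm_sub hr hs ht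
  have hup : ‖σ t - σ s‖ ≤ 2 * ε := by
    rw [← dist_eq_norm]
    linarith [dist_triangle_right (σ t) (σ s) y, Metric.mem_closedBall.1 hsy,
      Metric.mem_closedBall.1 hty]
  linarith

end CrBoundedCurve

theorem stmt12_general (d : ℕ) (r : ℝ) (hr : 1 < r)
    (ε : ℝ) (hε : 0 < ε)
    (σ : ℝ → EuclideanSpace ℝ (Fin d))
    (hemb : IsEmbeddedCurve σ) (hbdd : CrBoundedCurve r σ)
    (y : EuclideanSpace ℝ (Fin d)) :
    ∃ a b : ℝ,
      |a| ≤ 1 ∧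
      Set.MapsTo (fun t => a * t + b) (Set.Icc (0 : ℝ) 1) (Set.Icc (0 : ℝ) 1) ∧
      sup01 (deriv (σ ∘ fun t => a * t + b)) ≤ 3 * ε ∧
      ∀ t ∈ Set.Icc (0 : ℝ) 1, σ t ∈ Metric.closedBall y ε →
        t ∈ (fun u => a * u + b) '' Set.Icc (0 : ℝ) 1 := by
  set M := sup01 (deriv σ)
  have hC1 := hbdd.contDiff_one hr
  have h0 : (0 : ℝ) ∈ Icc (0 : ℝ) 1 := left_mem_Icc.2 zero_le_one
  have hM : 0 < M := (norm_pos_iff.2 (hemb.2 0 h0)).trans_le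
    (norm_le_sup01 (hC1.continuous_deriv le_rfl).continuousOn h0)
  set a := min 1 (3 * ε / M)
  have ha : 0 < a := lt_min one_pos (by positivity)
  obtain ⟨b, hb0, hba, hcover⟩ := exists_subset_Icc_add_of_sub_le
    (S := {t ∈ Icc 0 1 | σ t ∈ Metric.closedBall y ε}) (fun t ht => ht.1) (min_le_left _ _)
    fun s hs t ht => (le_abs_self _).trans <| le_min (abs_sub_le_one_of_mem_Icc ht.1 hs.1) <|
      (le_div_iff₀' hM).2 (hbdd.mul_abs_sub_le_of_mem_closedBall hr hs.1 ht.1 hs.2 ht.2)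
  have himage : (fun u => a * u + b) '' Icc 0 1 = Icc b (b + a) := by
    rw [image_affine_Icc' ha]; simp [add_comm]
  have hmaps : MapsTo (fun t => a * t + b) (Icc 0 1) (Icc 0 1) :=
    mapsTo_iff_image_subset.2 (himage ▸ Icc_subset_Icc hb0 hba)
  refine ⟨a, b, (abs_of_pos ha).trans_le (min_le_left _ _), hmaps, ?_,
    fun t ht hty => himage ▸ hcover ⟨ht, hty⟩⟩
  calc _ ≤ |a| * M := sup01_deriv_comp_affine_le (hC1.differentiable one_ne_zero)
        (hC1.continuous_deriv le_rfl).continuousOn hmaps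
    _ ≤ 3 * ε / M * M := by rw [abs_of_pos ha]; gcongr; exact min_le_right _ _
    _ = 3 * ε := div_mul_cancel₀ _ hM.ne'

theorem stmt12 (d : ℕ) (hd : 1 ≤ d) (r : ℝ) (hr : 1 < r)
    (ε : ℝ) (hε : 0 < ε)
    (σ : ℝ → EuclideanSpace ℝ (Fin d))
    (hemb : IsEmbeddedCurve σ) (hbdd : CrBoundedCurve r σ)
    (y : EuclideanSpace ℝ (Fin d)) :
    ∃ a b : ℝ,
      |a| ≤ 1 ∧
      Set.MapsTo (fun t => a * t + b) (Set.Icc (0 : ℝ) 1) (Set.Icc (0 : ℝ) 1) ∧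
      sup01 (deriv (σ ∘ fun t => a * t + b)) ≤ 3 * ε ∧
      ∀ t ∈ Set.Icc (0 : ℝ) 1, σ t ∈ Metric.closedBall y ε →
        t ∈ (fun u => a * u + b) '' Set.Icc (0 : ℝ) 1 :=
  stmt12_general d r hr ε hε σ hemb hbdd y
end
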